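/- For every parameter h ∈ [0, 1/2], the diffusion coefficient of the lifted negative Bernoulli shift map exists and is the linear function lim_{n→∞} (1/(2n)) ∫_0^1 (W_h^n(x) − x)² dx = h. -/

import Mathlib

open Filter

/-- The lifted negative Bernoulli shift map `W_h`. -/
noncomputable def liftW (h x : ℝ) : ℝ :=
  if Int.fract x < 1/2 then (⌊x⌋ : ℝ) + (-2 * Int.fract x + 1 + h)
  else (⌊x⌋ : ℝ) + (-2 * Int.fract x + 2 - h)

/-!
Let `j = W_h - id` be the jump function and `L` the transfer operator of `W_h` modulo 1, so that
`∫₀¹ φ · (f ∘ W_h) = ∫₀¹ (L φ) · f` for every 1-periodic `f`. For `0 ≤ h ≤ 1/2` the function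
`P = L j` is piecewise linear and satisfies `L P = -P / 2` almost everywhere. Since
`W_hⁿ⁺¹ - id = j + (W_hⁿ - id) ∘ W_h`, the moments `Iₙ = ∫₀¹ (W_hⁿ - id)²` and
`Aₙ = ∫₀¹ P · (W_hⁿ - id)` satisfy `Iₙ₊₁ = ∫ j² + 2 Aₙ + Iₙ` and `Aₙ₊₁ = ∫ P j - Aₙ / 2`.
Hence `Aₙ → (2/3) ∫ P j`, and by Cesàro `Iₙ / 2n → (1/2) ∫ j² + (2/3) ∫ P j = h`.
-/

open MeasureTheory intervalIntegral Set Function Topology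

structure BddMeasurable {α : Type*} [MeasurableSpace α] (f : α → ℝ) : Prop where
  measurable : Measurable f
  exists_abs_le : ∃ C, ∀ x, |f x| ≤ C

namespace BddMeasurable

variable {α β : Type*} [MeasurableSpace α] [MeasurableSpace β] {f g : α → ℝ}

lemma const (c : ℝ) : BddMeasurable fun _ : α => c :=
  ⟨measurable_const, |c|, fun _ => le_rfl⟩

lemma mul (hf : BddMeasurable f) (hg : BddMeasurable g) : BddMeasurable fun x => f x * g x := by
  obtain ⟨C, hC⟩ := hf.exists_abs_le
  obtain ⟨D, hD⟩ := hg.exists_abs_le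
  refine ⟨hf.measurable.mul hg.measurable, C * D, fun x => ?_⟩
  rw [abs_mul]
  exact mul_le_mul (hC x) (hD x) (abs_nonneg _) ((abs_nonneg _).trans (hC x))

lemma pow (hf : BddMeasurable f) (n : ℕ) : BddMeasurable fun x => f x ^ n := by
  obtain ⟨C, hC⟩ := hf.exists_abs_le
  refine ⟨hf.measurable.pow_const n, C ^ n, fun x => ?_⟩
  rw [abs_pow]
  exact pow_le_pow_left₀ (abs_nonneg _) (hC x) n

lemma comp (hf : BddMeasurable f) {u : β → α} (hu : Measurable u) :
    BddMeasurable fun x => f (u x) :=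
  ⟨hf.measurable.comp hu, hf.exists_abs_le.imp fun _ hC x => hC (u x)⟩

lemma intervalIntegrable {f : ℝ → ℝ} (hf : BddMeasurable f) (a b : ℝ) :
    IntervalIntegrable f volume a b := by
  obtain ⟨C, hC⟩ := hf.exists_abs_le
  refine (intervalIntegrable_const (c := C)).mono_fun hf.measurable.aestronglyMeasurable
    (ae_of_all _ fun x => ?_)
  simpa [Real.norm_eq_abs] using (hC x).trans (le_abs_self C)

end BddMeasurable

lemma intervalIntegral.integral_congr_Ioo_of_countable {f g : ℝ → ℝ} {a b : ℝ} (hab : a ≤ b)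
    {s : Set ℝ} (hs : s.Countable) (hfg : ∀ x ∈ Ioo a b, x ∉ s → f x = g x) :
    ∫ x in a..b, f x = ∫ x in a..b, g x := by
  refine integral_congr_ae ?_
  filter_upwards [(hs.insert b).ae_notMem volume] with x hx hxab
  rw [uIoc_of_le hab] at hxab
  exact hfg x ⟨hxab.1, lt_of_le_of_ne hxab.2 fun e => hx (e ▸ mem_insert x s)⟩
    fun hxs => hx (mem_insert_of_mem _ hxs)

lemma intervalIntegral.integral_congr_Ioo {f g : ℝ → ℝ} {a b : ℝ} (hab : a ≤ b)
    (hfg : EqOn f g (Ioo a b)) : ∫ x in a..b, f x = ∫ x in a..b, g x :=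
  integral_congr_Ioo_of_countable hab countable_empty fun _ hx _ => hfg hx

lemma intervalIntegral.integral_quadratic (c₂ c₁ c₀ a b : ℝ) :
    ∫ x in a..b, c₂ * x ^ 2 + c₁ * x + c₀ =
      c₂ * (b ^ 3 - a ^ 3) / 3 + c₁ * (b ^ 2 - a ^ 2) / 2 + c₀ * (b - a) := by
  rw [intervalIntegral.integral_add (Continuous.intervalIntegrable (by fun_prop) _ _)
      intervalIntegrable_const,
    intervalIntegral.integral_add (Continuous.intervalIntegrable (by fun_prop) _ _)
      (Continuous.intervalIntegrable (by fun_prop) _ _)]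
  simp [intervalIntegral.integral_const_mul c₁ fun x => x]
  ring

lemma intervalIntegral.integral_mul_comp_sub_two_mul (φ f : ℝ → ℝ) (a b c : ℝ) :
    ∫ x in a..b, φ x * f (c - 2 * x) =
      2⁻¹ * ∫ y in c - 2 * b..c - 2 * a, φ ((c - y) / 2) * f y := by
  have := integral_comp_sub_mul (a := a) (b := b) (fun y => φ ((c - y) / 2) * f y) two_ne_zero c
  simpa only [sub_sub_cancel, mul_div_cancel_left₀ _ (two_ne_zero' ℝ), smul_eq_mul] using this

lemma tendsto_div_of_recurrence {I A : ℕ → ℝ} {G B : ℝ}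
    (hI : ∀ n, I (n + 1) = G + 2 * A n + I n) (hA : ∀ n, A (n + 1) = B - A n / 2) :
    Tendsto (fun n : ℕ => 1 / (2 * (n : ℝ)) * I n) atTop (𝓝 (G / 2 + 2 * B / 3)) := by
  have hA_eq : ∀ n, A n = 2 * B / 3 + (-1/2 : ℝ) ^ n * (A 0 - 2 * B / 3) := by
    intro n
    induction n with
    | zero => simp
    | succ n ih => rw [hA, ih, pow_succ]; ring
  have hA_lim : Tendsto A atTop (𝓝 (2 * B / 3)) := by
    have := ((tendsto_pow_atTop_nhds_zero_of_abs_lt_one (r := -1/2) (by norm_num)).mul_const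
      (A 0 - 2 * B / 3)).const_add (2 * B / 3)
    simpa [← hA_eq] using this
  have hI_eq : ∀ n, I n = I 0 + ∑ k ∈ Finset.range n, (G + 2 * A k) := by
    intro n
    induction n with
    | zero => simp
    | succ n ih => rw [hI, ih, Finset.sum_range_succ]; ring
  have hI₀ := (tendsto_inv_atTop_nhds_zero_nat (𝕜 := ℝ)).mul_const (I 0)
  convert (hI₀.add ((hA_lim.const_mul 2).const_add G).cesaro).const_mul (1 / 2) using 1
  · ext n
    rw [hI_eq]
    ring
  · congr 1
    ring

namespace NegBernoulli

variable {h : ℝ}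

lemma liftW_eq (h x : ℝ) :
    liftW h x = 3 * ⌊x⌋ + (if Int.fract x < 1/2 then 1 + h else 2 - h) - 2 * x := by
  unfold liftW
  split_ifs <;> rw [← Int.self_sub_floor] <;> ring

lemma measurable_liftW (h : ℝ) : Measurable (liftW h) := by
  unfold liftW
  exact Measurable.ite (measurableSet_lt (by fun_prop) measurable_const) (by fun_prop)
    (by fun_prop)

lemma liftW_add_one (h x : ℝ) : liftW h (x + 1) = liftW h x + 1 := by
  simp only [liftW_eq, Int.floor_add_one, Int.fract_add_one]
  push_cast
  ring

lemma _root_.Function.Periodic.comp_liftW {f : ℝ → ℝ} (hf : Periodic f 1) (h x : ℝ) :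
    f (liftW h x) = f ((if Int.fract x < 1/2 then 1 + h else 2 - h) - 2 * x) := by
  rw [liftW_eq, add_sub_assoc, add_comm]
  simpa using hf.int_mul (3 * ⌊x⌋) _

noncomputable def jump (h x : ℝ) : ℝ := liftW h x - x

lemma jump_eq (h x : ℝ) :
    jump h x = (if Int.fract x < 1/2 then 1 + h else 2 - h) - 3 * Int.fract x := by
  rw [jump, liftW_eq, ← Int.self_sub_floor]
  ring

lemma jump_of_lt_half {x : ℝ} (hx₀ : 0 ≤ x) (hx : x < 1/2) : jump h x = 1 + h - 3 * x := by
  rw [jump_eq, Int.fract_eq_self.2 ⟨hx₀, by linarith⟩, if_pos hx]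

lemma jump_of_half_le {x : ℝ} (hx : 1/2 ≤ x) (hx₁ : x < 1) : jump h x = 2 - h - 3 * x := by
  rw [jump_eq, Int.fract_eq_self.2 ⟨by linarith, hx₁⟩, if_neg (not_lt.2 hx)]

lemma abs_jump_le (h x : ℝ) : |jump h x| ≤ 1 + |h| := by
  have := Int.fract_nonneg x
  have := Int.fract_lt_one x
  rw [jump_eq, abs_le]
  split_ifs <;> constructor <;> linarith [neg_abs_le h, le_abs_self h]

lemma bddMeasurable_jump (h : ℝ) : BddMeasurable (jump h) :=
  ⟨(measurable_liftW h).sub measurable_id, 1 + |h|, abs_jump_le h⟩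

noncomputable def displacement (h : ℝ) (n : ℕ) (x : ℝ) : ℝ := (liftW h)^[n] x - x

lemma displacement_zero (h x : ℝ) : displacement h 0 x = 0 := sub_self x

lemma displacement_succ (h : ℝ) (n : ℕ) (x : ℝ) :
    displacement h (n + 1) x = jump h x + displacement h n (liftW h x) := by
  rw [displacement, iterate_succ_apply, displacement, jump]
  ring

lemma periodic_displacement (h : ℝ) (n : ℕ) : Periodic (displacement h n) 1 := fun x => by
  have hcomm : Function.Commute (liftW h) (· + 1) := liftW_add_one h
  simp only [displacement, (hcomm.iterate_left n).eq x]
  ring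

lemma abs_displacement_le (h : ℝ) (n : ℕ) (x : ℝ) :
    |displacement h n x| ≤ n * (1 + |h|) := by
  induction n generalizing x with
  | zero => simp [displacement_zero]
  | succ n ih =>
    rw [displacement_succ, Nat.cast_succ]
    linarith [abs_add_le (jump h x) (displacement h n (liftW h x)), abs_jump_le h x,
      ih (liftW h x)]

lemma bddMeasurable_displacement (h : ℝ) (n : ℕ) : BddMeasurable (displacement h n) :=
  ⟨((measurable_liftW h).iterate n).sub measurable_id, _, abs_displacement_le h n⟩

/-! Modulo 1, every `y` has exactly two preimages under `W_h`, one on each branch: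
`leftPreimage h y ∈ [0, 1/2)` and `rightPreimage h y ∈ [1/2, 1)`. -/

noncomputable def leftPreimage (h y : ℝ) : ℝ := Int.fract (h - y) / 2

noncomputable def rightPreimage (h y : ℝ) : ℝ := (1 + Int.fract (-h - y)) / 2

lemma leftPreimage_mem_Ico (h y : ℝ) : leftPreimage h y ∈ Ico 0 (1/2) :=
  ⟨by unfold leftPreimage; linarith [Int.fract_nonneg (h - y)],
    by unfold leftPreimage; linarith [Int.fract_lt_one (h - y)]⟩

lemma rightPreimage_mem_Ico (h y : ℝ) : rightPreimage h y ∈ Ico (1/2) 1 :=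
  ⟨by unfold rightPreimage; linarith [Int.fract_nonneg (-h - y)],
    by unfold rightPreimage; linarith [Int.fract_lt_one (-h - y)]⟩

lemma measurable_leftPreimage (h : ℝ) : Measurable (leftPreimage h) := by
  unfold leftPreimage; fun_prop

lemma measurable_rightPreimage (h : ℝ) : Measurable (rightPreimage h) := by
  unfold rightPreimage; fun_prop

lemma periodic_leftPreimage (h : ℝ) : Periodic (leftPreimage h) 1 := fun y => by
  rw [leftPreimage, sub_add_eq_sub_sub, Int.fract_sub_one, leftPreimage]

lemma periodic_rightPreimage (h : ℝ) : Periodic (rightPreimage h) 1 := fun y => by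
  rw [rightPreimage, sub_add_eq_sub_sub, Int.fract_sub_one, rightPreimage]

lemma leftPreimage_of_le {y : ℝ} (hy₀ : h - 1 < y) (hy : y ≤ h) :
    leftPreimage h y = (h - y) / 2 := by
  rw [leftPreimage, Int.fract_eq_self.2 ⟨by linarith, by linarith⟩]

lemma leftPreimage_of_lt {y : ℝ} (hy : h < y) (hy₁ : y ≤ h + 1) :
    leftPreimage h y = (1 + h - y) / 2 := by
  rw [leftPreimage, show Int.fract (h - y) = 1 + h - y from
    Int.fract_eq_iff.2 ⟨by linarith, by linarith, -1, by push_cast; ring⟩]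

lemma rightPreimage_of_le {y : ℝ} (hy₀ : -h < y) (hy : y ≤ 1 - h) :
    rightPreimage h y = (2 - h - y) / 2 := by
  rw [rightPreimage, show Int.fract (-h - y) = 1 - h - y from
    Int.fract_eq_iff.2 ⟨by linarith, by linarith, -1, by push_cast; ring⟩]
  ring

lemma rightPreimage_of_lt {y : ℝ} (hy : 1 - h < y) (hy₁ : y ≤ 2 - h) :
    rightPreimage h y = (3 - h - y) / 2 := by
  rw [rightPreimage, show Int.fract (-h - y) = 2 - h - y from
    Int.fract_eq_iff.2 ⟨by linarith, by linarith, -2, by push_cast; ring⟩]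
  ring

noncomputable def transfer (h : ℝ) (φ : ℝ → ℝ) (y : ℝ) : ℝ :=
  (φ (leftPreimage h y) + φ (rightPreimage h y)) / 2

lemma bddMeasurable_transfer {φ : ℝ → ℝ} (hφ : BddMeasurable φ) (h : ℝ) :
    BddMeasurable (transfer h φ) := by
  obtain ⟨C, hC⟩ := hφ.exists_abs_le
  refine ⟨((hφ.measurable.comp (measurable_leftPreimage h)).add
    (hφ.measurable.comp (measurable_rightPreimage h))).div_const 2, C, fun y => ?_⟩
  rw [transfer, abs_div, abs_two, div_le_iff₀ two_pos]
  linarith [abs_add_le (φ (leftPreimage h y)) (φ (rightPreimage h y)), hC (leftPreimage h y),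
    hC (rightPreimage h y)]

/- On each half of `[0, 1]` substitute `y = c - 2x`; the resulting integral over a period
`[h, h + 1]` or `[-h, 1 - h]` folds back onto `[0, 1]` by periodicity. -/
lemma integral_zero_half_mul_comp_liftW (φ : ℝ → ℝ) {f : ℝ → ℝ} (hf : Periodic f 1) (h : ℝ) :
    ∫ x in (0:ℝ)..1/2, φ x * f (liftW h x) =
      2⁻¹ * ∫ y in (0:ℝ)..1, φ (leftPreimage h y) * f y := calc
  _ = ∫ x in (0:ℝ)..1/2, φ x * f (1 + h - 2 * x) :=
        integral_congr_Ioo (by norm_num) fun x ⟨hx₀, hx⟩ => by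
          rw [hf.comp_liftW, Int.fract_eq_self.2 ⟨hx₀.le, by linarith⟩, if_pos hx]
  _ = 2⁻¹ * ∫ y in h..h + 1, φ ((1 + h - y) / 2) * f y := by
        rw [integral_mul_comp_sub_two_mul]; congr 2 <;> ring
  _ = 2⁻¹ * ∫ y in h..h + 1, φ (leftPreimage h y) * f y := by
        congr 1
        exact integral_congr_Ioo (by linarith) fun y ⟨hy, hy₁⟩ => by
          rw [leftPreimage_of_lt hy hy₁.le]
  _ = _ := by
        have := (((periodic_leftPreimage h).comp φ).mul hf).intervalIntegral_add_eq h 0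
        rw [zero_add] at this
        exact congr_arg _ this

lemma integral_half_one_mul_comp_liftW (φ : ℝ → ℝ) {f : ℝ → ℝ} (hf : Periodic f 1) (h : ℝ) :
    ∫ x in (1/2:ℝ)..1, φ x * f (liftW h x) =
      2⁻¹ * ∫ y in (0:ℝ)..1, φ (rightPreimage h y) * f y := calc
  _ = ∫ x in (1/2:ℝ)..1, φ x * f (2 - h - 2 * x) :=
        integral_congr_Ioo (by norm_num) fun x ⟨hx, hx₁⟩ => by
          rw [hf.comp_liftW, Int.fract_eq_self.2 ⟨by linarith, hx₁⟩, if_neg (not_lt.2 hx.le)]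
  _ = 2⁻¹ * ∫ y in -h..-h + 1, φ ((2 - h - y) / 2) * f y := by
        rw [integral_mul_comp_sub_two_mul]; congr 2 <;> ring
  _ = 2⁻¹ * ∫ y in -h..-h + 1, φ (rightPreimage h y) * f y := by
        congr 1
        exact integral_congr_Ioo (by linarith) fun y ⟨hy, hy₁⟩ => by
          rw [rightPreimage_of_le hy (by linarith)]
  _ = _ := by
        have := (((periodic_rightPreimage h).comp φ).mul hf).intervalIntegral_add_eq (-h) 0
        rw [zero_add] at this
        exact congr_arg _ this

theorem integral_mul_comp_liftW {φ f : ℝ → ℝ} (hφ : BddMeasurable φ) (hf : BddMeasurable f)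
    (hper : Periodic f 1) (h : ℝ) :
    ∫ x in (0:ℝ)..1, φ x * f (liftW h x) = ∫ y in (0:ℝ)..1, transfer h φ y * f y := by
  have hW := (hφ.mul (hf.comp (measurable_liftW h))).intervalIntegrable
  have hL := ((hφ.comp (measurable_leftPreimage h)).mul hf).intervalIntegrable
  have hR := ((hφ.comp (measurable_rightPreimage h)).mul hf).intervalIntegrable
  rw [← integral_add_adjacent_intervals (hW 0 (1/2)) (hW (1/2) 1),
    integral_zero_half_mul_comp_liftW φ hper, integral_half_one_mul_comp_liftW φ hper, ← mul_add,
    ← intervalIntegral.integral_add (hL 0 1) (hR 0 1), ← intervalIntegral.integral_const_mul]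
  congr 1 with y
  rw [transfer]
  ring

theorem integral_comp_liftW {f : ℝ → ℝ} (hf : BddMeasurable f) (hper : Periodic f 1) (h : ℝ) :
    ∫ x in (0:ℝ)..1, f (liftW h x) = ∫ x in (0:ℝ)..1, f x := by
  simpa [transfer] using integral_mul_comp_liftW (BddMeasurable.const 1) hf hper h

lemma transfer_jump (h y : ℝ) :
    transfer h (jump h) y = 3/2 * (1 - leftPreimage h y - rightPreimage h y) := by
  obtain ⟨hl₀, hl₁⟩ := leftPreimage_mem_Ico h y
  obtain ⟨hr₀, hr₁⟩ := rightPreimage_mem_Ico h y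
  rw [transfer, jump_of_lt_half hl₀ hl₁, jump_of_half_le hr₀ hr₁]
  ring

lemma transfer_jump_of_pos_of_le (h₁ : h ≤ 1/2) {y : ℝ} (hy₀ : 0 < y) (hy : y ≤ h) :
    transfer h (jump h) y = 3/2 * y := by
  rw [transfer_jump, leftPreimage_of_le (by linarith) hy,
    rightPreimage_of_le (h := h) (by linarith) (by linarith)]
  ring

lemma transfer_jump_of_lt_of_le (h₀ : 0 ≤ h) {y : ℝ} (hy : h < y) (hy₁ : y ≤ 1 - h) :
    transfer h (jump h) y = 3/2 * (y - 1/2) := by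
  rw [transfer_jump, leftPreimage_of_lt hy (by linarith),
    rightPreimage_of_le (by linarith) hy₁]
  ring

lemma transfer_jump_of_lt_of_lt_one (h₁ : h ≤ 1/2) {y : ℝ} (hy : 1 - h < y) (hy₁ : y < 1) :
    transfer h (jump h) y = 3/2 * (y - 1) := by
  rw [transfer_jump, leftPreimage_of_lt (by linarith) (by linarith),
    rightPreimage_of_lt hy (by linarith)]
  ring

lemma transfer_transfer_jump (h₀ : 0 ≤ h) (h₁ : h ≤ 1/2) {y : ℝ} (hy₀ : 0 < y) (hy₁ : y < 1)
    (hyh : y ≠ h) (hyh' : y ≠ 1 - h) :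
    transfer h (transfer h (jump h)) y = -transfer h (jump h) y / 2 := by
  rw [transfer]
  rcases hyh.lt_or_gt with hy | hy
  · rw [leftPreimage_of_le (by linarith) hy.le,
      rightPreimage_of_le (h := h) (y := y) (by linarith) (by linarith),
      transfer_jump_of_pos_of_le (y := (h - y) / 2) h₁ (by linarith) (by linarith),
      transfer_jump_of_lt_of_lt_one (y := (2 - h - y) / 2) h₁ (by linarith) (by linarith),
      transfer_jump_of_pos_of_le h₁ hy₀ hy.le]
    ring
  rcases hyh'.lt_or_gt with hy' | hy'
  · rw [leftPreimage_of_lt hy (by linarith), rightPreimage_of_le (by linarith) hy'.le,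
      transfer_jump_of_lt_of_le (y := (1 + h - y) / 2) h₀ (by linarith) (by linarith),
      transfer_jump_of_lt_of_le (y := (2 - h - y) / 2) h₀ (by linarith) (by linarith),
      transfer_jump_of_lt_of_le h₀ hy hy'.le]
    ring
  · rw [leftPreimage_of_lt hy (by linarith), rightPreimage_of_lt hy' (by linarith),
      transfer_jump_of_pos_of_le (y := (1 + h - y) / 2) h₁ (by linarith) (by linarith),
      transfer_jump_of_lt_of_lt_one (y := (3 - h - y) / 2) h₁ (by linarith) (by linarith),
      transfer_jump_of_lt_of_lt_one h₁ hy' hy₁]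
    ring

lemma integral_jump_sq (h : ℝ) : ∫ x in (0:ℝ)..1, jump h x ^ 2 = 1/4 + h/2 + h ^ 2 := by
  have hi := ((bddMeasurable_jump h).pow 2).intervalIntegrable
  have left : ∫ x in (0:ℝ)..1/2, jump h x ^ 2 =
      ∫ x in (0:ℝ)..1/2, 9 * x ^ 2 + (-6 * (1 + h)) * x + (1 + h) ^ 2 :=
    integral_congr_Ioo (by norm_num) fun x ⟨hx₀, hx⟩ => by
      rw [jump_of_lt_half hx₀.le hx]; ring
  have right : ∫ x in (1/2:ℝ)..1, jump h x ^ 2 =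
      ∫ x in (1/2:ℝ)..1, 9 * x ^ 2 + (-6 * (2 - h)) * x + (2 - h) ^ 2 :=
    integral_congr_Ioo (by norm_num) fun x ⟨hx, hx₁⟩ => by
      rw [jump_of_half_le hx.le hx₁]; ring
  rw [← integral_add_adjacent_intervals (hi 0 (1/2)) (hi (1/2) 1), left, right,
    integral_quadratic, integral_quadratic]
  ring

lemma integral_transfer_jump_mul_jump (h₀ : 0 ≤ h) (h₁ : h ≤ 1/2) :
    ∫ y in (0:ℝ)..1, transfer h (jump h) y * jump h y = -3/16 + 9/8 * h - 3/4 * h ^ 2 := by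
  have hi := ((bddMeasurable_transfer (bddMeasurable_jump h) h).mul
    (bddMeasurable_jump h)).intervalIntegrable
  have piece₁ : ∫ y in (0:ℝ)..h, transfer h (jump h) y * jump h y =
      ∫ y in (0:ℝ)..h, -9/2 * y ^ 2 + 3/2 * (1 + h) * y + 0 :=
    integral_congr_Ioo h₀ fun y ⟨hy₀, hy⟩ => by
      rw [transfer_jump_of_pos_of_le h₁ hy₀ hy.le, jump_of_lt_half hy₀.le (by linarith)]
      ring
  have piece₂ : ∫ y in h..1/2, transfer h (jump h) y * jump h y =
      ∫ y in h..1/2, -9/2 * y ^ 2 + (3/2 * (1 + h) + 9/4) * y + -3/4 * (1 + h) :=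
    integral_congr_Ioo h₁ fun y ⟨hy₀, hy⟩ => by
      rw [transfer_jump_of_lt_of_le h₀ hy₀ (by linarith), jump_of_lt_half (by linarith) hy]
      ring
  have piece₃ : ∫ y in (1/2:ℝ)..1 - h, transfer h (jump h) y * jump h y =
      ∫ y in (1/2:ℝ)..1 - h, -9/2 * y ^ 2 + (3/2 * (2 - h) + 9/4) * y + -3/4 * (2 - h) :=
    integral_congr_Ioo (by linarith) fun y ⟨hy₀, hy⟩ => by
      rw [transfer_jump_of_lt_of_le h₀ (by linarith) hy.le, jump_of_half_le hy₀.le (by linarith)]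
      ring
  have piece₄ : ∫ y in 1 - h..1, transfer h (jump h) y * jump h y =
      ∫ y in 1 - h..1, -9/2 * y ^ 2 + (3/2 * (2 - h) + 9/2) * y + -3/2 * (2 - h) :=
    integral_congr_Ioo (by linarith) fun y ⟨hy₀, hy⟩ => by
      rw [transfer_jump_of_lt_of_lt_one h₁ hy₀ hy, jump_of_half_le (by linarith) hy]
      ring
  rw [← integral_add_adjacent_intervals (hi 0 h) (hi h 1),
    ← integral_add_adjacent_intervals (hi h (1/2)) (hi (1/2) 1),
    ← integral_add_adjacent_intervals (hi (1/2) (1 - h)) (hi (1 - h) 1),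
    piece₁, piece₂, piece₃, piece₄, integral_quadratic, integral_quadratic, integral_quadratic,
    integral_quadratic]
  ring

noncomputable def secondMoment (h : ℝ) (n : ℕ) : ℝ := ∫ x in (0:ℝ)..1, displacement h n x ^ 2

/- By `integral_mul_comp_liftW` this is `∫₀¹ jump · (displacement n ∘ W_h)`, the sum of the
first `n` autocorrelations of the jump function. -/
noncomputable def correlation (h : ℝ) (n : ℕ) : ℝ :=
  ∫ x in (0:ℝ)..1, transfer h (jump h) x * displacement h n x

lemma secondMoment_succ (h : ℝ) (n : ℕ) :
    secondMoment h (n + 1) = (1/4 + h/2 + h ^ 2) + 2 * correlation h n + secondMoment h n := by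
  have hj := bddMeasurable_jump h
  have hS := bddMeasurable_displacement h n
  have hj2 := (hj.pow 2).intervalIntegrable 0 1
  have hjS := ((hj.mul (hS.comp (measurable_liftW h))).intervalIntegrable 0 1).const_mul 2
  have hS2 := ((hS.comp (measurable_liftW h)).pow 2).intervalIntegrable 0 1
  have hper := periodic_displacement h n
  calc secondMoment h (n + 1)
      = ∫ x in (0:ℝ)..1, jump h x ^ 2 + 2 * (jump h x * displacement h n (liftW h x)) +
          displacement h n (liftW h x) ^ 2 := by
        unfold secondMoment
        congr 1 with x
        rw [displacement_succ]
        ring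
    _ = (∫ x in (0:ℝ)..1, jump h x ^ 2) +
          2 * (∫ x in (0:ℝ)..1, jump h x * displacement h n (liftW h x)) +
          ∫ x in (0:ℝ)..1, displacement h n (liftW h x) ^ 2 := by
        rw [intervalIntegral.integral_add (hj2.add hjS) hS2,
          intervalIntegral.integral_add hj2 hjS, intervalIntegral.integral_const_mul]
    _ = _ := by
        rw [integral_jump_sq, integral_mul_comp_liftW hj hS hper,
          integral_comp_liftW (f := fun x => displacement h n x ^ 2) (hS.pow 2)
            fun x => congrArg (· ^ 2) (hper x)]
        rfl

lemma correlation_succ (h₀ : 0 ≤ h) (h₁ : h ≤ 1/2) (n : ℕ) :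
    correlation h (n + 1) = (-3/16 + 9/8 * h - 3/4 * h ^ 2) - correlation h n / 2 := by
  have hP := bddMeasurable_transfer (bddMeasurable_jump h) h
  have hS := bddMeasurable_displacement h n
  calc correlation h (n + 1)
      = (∫ x in (0:ℝ)..1, transfer h (jump h) x * jump h x) +
          ∫ x in (0:ℝ)..1, transfer h (jump h) x * displacement h n (liftW h x) := by
        rw [correlation, ← intervalIntegral.integral_add
          ((hP.mul (bddMeasurable_jump h)).intervalIntegrable 0 1)
          ((hP.mul (hS.comp (measurable_liftW h))).intervalIntegrable 0 1)]
        congr 1 with x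
        rw [displacement_succ]
        ring
    _ = (-3/16 + 9/8 * h - 3/4 * h ^ 2) +
          ∫ y in (0:ℝ)..1, transfer h (transfer h (jump h)) y * displacement h n y := by
        rw [integral_transfer_jump_mul_jump h₀ h₁,
          integral_mul_comp_liftW hP hS (periodic_displacement h n)]
    _ = (-3/16 + 9/8 * h - 3/4 * h ^ 2) +
          ∫ y in (0:ℝ)..1, -2⁻¹ * (transfer h (jump h) y * displacement h n y) := by
        congr 1
        refine integral_congr_Ioo_of_countable zero_le_one (Set.toFinite {h, 1 - h}).countable
          fun y ⟨hy₀, hy₁⟩ hy => ?_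
        simp only [mem_insert_iff, mem_singleton_iff, not_or] at hy
        rw [transfer_transfer_jump h₀ h₁ hy₀ hy₁ hy.1 hy.2]
        ring
    _ = _ := by
        rw [intervalIntegral.integral_const_mul, correlation]
        ring

end NegBernoulli

theorem stmt13 (h : ℝ) (hh : h ∈ Set.Icc (0:ℝ) (1/2)) :
    Tendsto (fun n : ℕ => (1/(2*(n:ℝ))) * ∫ x in (0:ℝ)..1, ((liftW h)^[n] x - x)^2)
      atTop (nhds h) := by
  have hlim := tendsto_div_of_recurrence (NegBernoulli.secondMoment_succ h)
    (NegBernoulli.correlation_succ hh.1 hh.2)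
  rw [show (1/4 + h/2 + h ^ 2) / 2 + 2 * (-3/16 + 9/8 * h - 3/4 * h ^ 2) / 3 = h by ring] at hlim
  exact hlim
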